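/- If X is exponentially distributed with unit mean and Y is Gamma distributed with shape parameter N (a positive integer) and unit scale, and X, Y are independent, then P(X/Y < s) = 1 - (1+s)^{-N} for all s ≥ 0. -/

import Mathlib

/-!
Conditioning on `Y` and using independence, `P(X/Y ≥ s) = E[P(X ≥ sY | Y)] = E[exp(-sY)]`, the
Laplace transform of the Gamma(N, 1) law at `s`. Multiplying the Gamma(a, r) density by `exp(-sy)`
gives `(r / (r + s))^a` times the Gamma(a, r + s) density, so this transform is `(1 + s)^(-N)`.
-/

open MeasureTheory ProbabilityTheory Real Set

namespace ProbabilityTheory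

lemma measurable_gammaPDF (a r : ℝ) : Measurable (gammaPDF a r) :=
  (measurable_gammaPDFReal a r).ennreal_ofReal

instance nullSingletonClass_gammaMeasure (a r : ℝ) : NullSingletonClass (gammaMeasure a r) :=
  inferInstanceAs (NullSingletonClass (volume.withDensity _))

instance nullSingletonClass_expMeasure (r : ℝ) : NullSingletonClass (expMeasure r) :=
  nullSingletonClass_gammaMeasure 1 r

lemma ae_pos_gammaMeasure (a r : ℝ) : ∀ᵐ y ∂gammaMeasure a r, 0 < y := by
  have hnonneg : ∀ᵐ y ∂gammaMeasure a r, 0 ≤ y := by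
    rw [gammaMeasure, ae_withDensity_iff (measurable_gammaPDF a r)]
    exact ae_of_all _ fun y hy ↦ not_lt.mp (mt gammaPDF_of_neg hy)
  filter_upwards [hnonneg, compl_mem_ae_iff.mpr (measure_singleton (0 : ℝ))] with y hy hy0
  exact lt_of_le_of_ne hy (Ne.symm hy0)

lemma expMeasure_Ici {r t : ℝ} (hr : 0 < r) (ht : 0 ≤ t) :
    expMeasure r (Ici t) = ENNReal.ofReal (exp (-(r * t))) := by
  have := isProbabilityMeasure_expMeasure hr
  have hcdf : 0 ≤ 1 - exp (-(r * t)) := by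
    rw [sub_nonneg, exp_le_one_iff, neg_nonpos]; positivity
  rw [← compl_Iio, prob_compl_eq_one_sub measurableSet_Iio, measure_congr Iio_ae_eq_Iic,
    ← ofReal_cdf, cdf_expMeasure_eq hr, if_pos ht, ← ENNReal.ofReal_one,
    ← ENNReal.ofReal_sub _ hcdf, sub_sub_cancel]

lemma gammaPDF_mul_exp_neg_mul {a r s : ℝ} (hr : 0 < r) (hrs : 0 < r + s) (y : ℝ) :
    gammaPDF a r y * ENNReal.ofReal (exp (-(s * y)))
      = ENNReal.ofReal ((r / (r + s)) ^ a) * gammaPDF a (r + s) y := by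
  rcases lt_or_ge y 0 with hy | hy
  · rw [gammaPDF_of_neg hy, gammaPDF_of_neg hy, zero_mul, mul_zero]
  rw [gammaPDF_of_nonneg hy, gammaPDF_of_nonneg hy, ← ENNReal.ofReal_mul' (exp_nonneg _),
    ← ENNReal.ofReal_mul (by positivity)]
  congr 1
  have : (r + s) ^ a ≠ 0 := (rpow_pos_of_pos hrs a).ne'
  rw [div_rpow hr.le hrs.le, mul_assoc _ (exp _), ← exp_add, ← neg_add, ← add_mul]
  field_simp

lemma lintegral_exp_neg_mul_gammaMeasure {a r s : ℝ} (ha : 0 < a) (hr : 0 < r)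
    (hrs : 0 < r + s) :
    ∫⁻ y, ENNReal.ofReal (exp (-(s * y))) ∂gammaMeasure a r
      = ENNReal.ofReal ((r / (r + s)) ^ a) := by
  rw [gammaMeasure, lintegral_withDensity_eq_lintegral_mul _ (measurable_gammaPDF a r)
    (by fun_prop)]
  simp only [Pi.mul_apply, gammaPDF_mul_exp_neg_mul hr hrs]
  rw [lintegral_const_mul _ (measurable_gammaPDF a _), lintegral_gammaPDF_eq_one ha hrs, mul_one]

lemma IndepFun.measure_div_lt {Ω : Type*} [MeasurableSpace Ω] {P : Measure Ω} {X Y : Ω → ℝ}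
    [IsFiniteMeasure P] {μ ν : Measure ℝ} [IsProbabilityMeasure μ] [IsProbabilityMeasure ν]
    (hXY : IndepFun X Y P) (hX : P.map X = μ) (hY : P.map Y = ν) (hν : ∀ᵐ y ∂ν, 0 < y)
    (s : ℝ) :
    P {ω | X ω / Y ω < s} = 1 - ∫⁻ y, μ (Ici (s * y)) ∂ν := by
  have hXm : AEMeasurable X P := .of_map_ne_zero (by rw [hX]; exact IsProbabilityMeasure.ne_zero μ)
  have hYm : AEMeasurable Y P := .of_map_ne_zero (by rw [hY]; exact IsProbabilityMeasure.ne_zero ν)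
  have hlaw : P.map (fun ω ↦ (X ω, Y ω)) = μ.prod ν := by
    rw [← hX, ← hY]; exact (indepFun_iff_map_prod_eq_prod_map_map hXm hYm).mp hXY
  have hS : MeasurableSet {p : ℝ × ℝ | s ≤ p.1 / p.2} :=
    measurableSet_le measurable_const (measurable_fst.div measurable_snd)
  have hsection : ∀ᵐ y ∂ν,
      μ ((fun x ↦ (x, y)) ⁻¹' {p : ℝ × ℝ | s ≤ p.1 / p.2}) = μ (Ici (s * y)) := by
    filter_upwards [hν] with y hy
    congr 1
    ext x
    simp [le_div_iff₀ hy]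
  calc P {ω | X ω / Y ω < s}
      = μ.prod ν {p : ℝ × ℝ | s ≤ p.1 / p.2}ᶜ := by
        rw [← hlaw, Measure.map_apply_of_aemeasurable (hXm.prodMk hYm) hS.compl]
        simp only [compl_ofPred, not_le, preimage_ofPred_eq]
    _ = 1 - ∫⁻ y, μ (Ici (s * y)) ∂ν := by
        rw [prob_compl_eq_one_sub hS, Measure.prod_apply_symm hS, lintegral_congr_ae hsection]

end ProbabilityTheory

theorem ratio_cdf
    {Ω : Type*} [MeasureSpace Ω] (P : Measure Ω := volume) [IsProbabilityMeasure P]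
    (X Y : Ω → ℝ) (N : ℕ) (hN : 0 < N)
    (hX : Measure.map X P = expMeasure 1)
    (hY : Measure.map Y P = gammaMeasure N 1)
    (hindep : IndepFun X Y P)
    (s : ℝ) (hs : 0 ≤ s) :
    (P {ω | X ω / Y ω < s}).toReal = 1 - (1 + s) ^ (-(N : ℝ)) := by
  have hN' : (0 : ℝ) < N := by exact_mod_cast hN
  have := isProbabilityMeasure_expMeasure one_pos
  have := isProbabilityMeasure_gammaMeasure hN' one_pos
  have hsurvival : ∀ᵐ y ∂gammaMeasure N 1,
      expMeasure 1 (Ici (s * y)) = ENNReal.ofReal (exp (-(s * y))) := by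
    filter_upwards [ae_pos_gammaMeasure N 1] with y hy
    rw [expMeasure_Ici one_pos (by positivity), one_mul]
  have hlaplace : (1 / (1 + s)) ^ (N : ℝ) = (1 + s) ^ (-(N : ℝ)) := by
    rw [one_div, inv_rpow (by positivity), rpow_neg (by positivity)]
  have hle : (1 + s) ^ (-(N : ℝ)) ≤ 1 :=
    rpow_le_one_of_one_le_of_nonpos (by linarith) (by linarith)
  rw [hindep.measure_div_lt hX hY (ae_pos_gammaMeasure N 1), lintegral_congr_ae hsurvival,
    lintegral_exp_neg_mul_gammaMeasure hN' one_pos (by positivity), hlaplace,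
    ENNReal.toReal_sub_of_le (ENNReal.ofReal_le_one.mpr hle) ENNReal.one_ne_top,
    ENNReal.toReal_one, ENNReal.toReal_ofReal (by positivity)]
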